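/- arXiv:1803.00673 — 2 statements merged into one kernel-verified Lean document; each statement's English description precedes it below -/
import Mathlib

section
/- Let d_1 = d_2 = ... = d_n = d be a constant zero-free graphical degree sequence with d < ⌊n/2⌋ and d ≤ n − 3. Then the sequence is not forcibly connected, i.e., it has a disconnected realization. -/
open SimpleGraph Multiset Finset

/-- The multiset of vertex degrees of a simple graph on a finite vertex type. -/
noncomputable def degreeMultiset {V : Type*} [Fintype V] (G : SimpleGraph V) : Multiset ℕ :=
  Finset.univ.val.map fun v => (G.neighborSet v).ncard

/-- A multiset of naturals is graphical if it is the degree multiset of some simple graph. -/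
def IsGraphicalM (m : Multiset ℕ) : Prop :=
  ∃ G : SimpleGraph (Fin (Multiset.card m)), degreeMultiset G = m

/-- A multiset is potentially connected if some realization is connected. -/
def PotentiallyConnectedM (m : Multiset ℕ) : Prop :=
  ∃ G : SimpleGraph (Fin (Multiset.card m)), degreeMultiset G = m ∧ G.Connected

/-- A multiset is forcibly connected if every realization is connected. -/
def ForciblyConnectedM (m : Multiset ℕ) : Prop :=
  ∀ G : SimpleGraph (Fin (Multiset.card m)), degreeMultiset G = m → G.Connected

/-- The multiset of terms of a finite sequence. -/
def seqM {n : ℕ} (d : Fin n → ℕ) : Multiset ℕ :=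
  Finset.univ.val.map d

/-- A sequence is graphical if some simple graph on `Fin n` realizes it. -/
def IsGraphicalSeq {n : ℕ} (d : Fin n → ℕ) : Prop :=
  ∃ G : SimpleGraph (Fin n), degreeMultiset G = seqM d

/-- A sequence is potentially connected if some realization is connected. -/
def PotentiallyConnectedSeq {n : ℕ} (d : Fin n → ℕ) : Prop :=
  ∃ G : SimpleGraph (Fin n), degreeMultiset G = seqM d ∧ G.Connected

/-- A sequence is forcibly connected if every realization is connected. -/
def ForciblyConnectedSeq {n : ℕ} (d : Fin n → ℕ) : Prop :=
  ∀ G : SimpleGraph (Fin n), degreeMultiset G = seqM d → G.Connected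
/-!
Take `K_{d+1}` together with a `d`-regular graph on the remaining `m = n - d - 1 ≥ d + 1`
vertices. The latter is a circulant graph on `ZMod m` whose jump set is symmetric, avoids `0`
and has `d` elements: the window `{-k, …, k}` minus `0` when `d = 2k`, and the complement of
the window of size `m - d` when `d` is odd (then `m` is even because `n d` is, so `m - d` is odd).
-/

open scoped Pointwise

lemma ZMod.exists_neg_eq_self_card_eq_two_mul_add_one {m k : ℕ} (hk : 2 * k < m) :
    ∃ W : Finset (ZMod m), 0 ∈ W ∧ -W = W ∧ #W = 2 * k + 1 := by
  refine ⟨(Finset.Icc (-k : ℤ) k).image (↑), ?_, ?_, ?_⟩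
  · exact Finset.mem_image.mpr ⟨0, by simp, Int.cast_zero⟩
  · ext x
    simp only [Finset.mem_neg, Finset.mem_image, Finset.mem_Icc]
    constructor
    · rintro ⟨_, ⟨i, hi, rfl⟩, rfl⟩
      exact ⟨-i, by omega, Int.cast_neg i⟩
    · rintro ⟨i, hi, rfl⟩
      exact ⟨_, ⟨-i, by omega, rfl⟩, by rw [Int.cast_neg, neg_neg]⟩
  · rw [Finset.card_image_of_injOn, Int.card_Icc]
    · omega
    intro a ha b hb hab
    simp only [Finset.coe_Icc, Set.mem_Icc] at ha hb
    have := Int.eq_zero_of_abs_lt_dvd ((ZMod.intCast_eq_intCast_iff_dvd_sub a b m).mp hab)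
      (by rw [abs_lt]; omega)
    omega

namespace SimpleGraph

variable {V W : Type*}

lemma ncard_neighborSet_eq_degree (G : SimpleGraph V) (v : V) [Fintype (G.neighborSet v)] :
    (G.neighborSet v).ncard = G.degree v := by
  rw [← Nat.card_coe_set_eq, Nat.card_eq_fintype_card, card_neighborSet_eq_degree]

lemma IsRegularOfDegree.sum [DecidableEq V] [DecidableEq W] {G : SimpleGraph V}
    {H : SimpleGraph W} [G.LocallyFinite] [H.LocallyFinite] {d : ℕ}
    (hG : G.IsRegularOfDegree d) (hH : H.IsRegularOfDegree d) :
    (G ⊕g H).IsRegularOfDegree d := by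
  rintro (v | w)
  · rw [← ncard_neighborSet_eq_degree, neighborSet_sum_inl,
      Set.ncard_image_of_injective _ Sum.inl_injective, ncard_neighborSet_eq_degree, hG]
  · rw [← ncard_neighborSet_eq_degree, neighborSet_sum_inr,
      Set.ncard_image_of_injective _ Sum.inr_injective, ncard_neighborSet_eq_degree, hH]

lemma IsRegularOfDegree.of_iso {G : SimpleGraph V} {G' : SimpleGraph W} [G.LocallyFinite]
    [G'.LocallyFinite] {d : ℕ} (f : G ≃g G') (h : G.IsRegularOfDegree d) :
    G'.IsRegularOfDegree d := fun w => by
  rw [← f.apply_symm_apply w, f.degree_eq, h]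

lemma neighborSet_circulantGraph {G : Type*} [AddGroup G] {s : Set G} (hs : -s = s) (v : G) :
    (circulantGraph s).neighborSet v = (· + v) '' (s \ {0}) := by
  have hneg : ∀ x, -x ∈ s \ {0} ↔ x ∈ s \ {0} := fun x => by
    rw [Set.mem_sdiff, Set.mem_sdiff, ← Set.mem_neg, hs, Set.mem_singleton_iff,
      Set.mem_singleton_iff, neg_eq_zero]
  ext u
  rw [Set.image_add_right, Set.mem_preimage, ← sub_eq_add_neg, circulantGraph_eq_erase_zero,
    mem_neighborSet, circulantGraph_adj, ← neg_sub u v, hneg, or_self, and_iff_right_iff_imp]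
  rintro ⟨-, h⟩ rfl
  exact h (sub_self _)

lemma circulantGraph_isRegularOfDegree {G : Type*} [AddGroup G] [Fintype G] [DecidableEq G]
    {s : Finset G} (hs : -s = s) :
    (circulantGraph (s : Set G)).IsRegularOfDegree #(s.erase 0) := fun v => by
  rw [← ncard_neighborSet_eq_degree, neighborSet_circulantGraph (by rw [← Finset.coe_neg, hs]),
    Set.ncard_image_of_injective _ (add_left_injective v), ← Finset.coe_erase,
    Set.ncard_coe_finset]

lemma exists_circulantGraph_isRegularOfDegree {m d : ℕ} [NeZero m] (hdm : d < m)
    (hmd : Even (m * d)) :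
    ∃ s : Finset (ZMod m), (circulantGraph (s : Set (ZMod m))).IsRegularOfDegree d := by
  rcases Nat.even_or_odd d with ⟨k, hk⟩ | hodd
  · obtain ⟨W, hW0, hWneg, hWcard⟩ :=
      ZMod.exists_neg_eq_self_card_eq_two_mul_add_one (m := m) (show 2 * k < m by omega)
    refine ⟨W, ?_⟩
    convert circulantGraph_isRegularOfDegree hWneg
    rw [Finset.card_erase_of_mem hW0]
    omega
  · obtain ⟨r, hr⟩ : Even m :=
      (Nat.even_mul.mp hmd).resolve_right (Nat.not_even_iff_odd.mpr hodd)
    obtain ⟨j, hj⟩ := hodd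
    obtain ⟨k, hk⟩ : Even (m - 1 - d) := ⟨r - j - 1, by omega⟩
    obtain ⟨W, hW0, hWneg, hWcard⟩ :=
      ZMod.exists_neg_eq_self_card_eq_two_mul_add_one (m := m) (show 2 * k < m by omega)
    refine ⟨Wᶜ, ?_⟩
    have hneg : -Wᶜ = Wᶜ := by
      ext x
      rw [Finset.mem_neg', Finset.mem_compl, Finset.mem_compl, ← Finset.mem_neg', hWneg]
    convert circulantGraph_isRegularOfDegree hneg
    rw [Finset.erase_eq_of_notMem (Finset.notMem_compl.mpr hW0), Finset.card_compl, ZMod.card]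
    omega

end SimpleGraph

lemma degreeMultiset_eq_replicate {V : Type*} [Fintype V] {G : SimpleGraph V} [G.LocallyFinite]
    {d : ℕ} (h : G.IsRegularOfDegree d) : degreeMultiset G = replicate (Fintype.card V) d := by
  rw [Multiset.eq_replicate]
  refine ⟨Multiset.card_map _ _, ?_⟩
  intro b hb
  obtain ⟨v, -, rfl⟩ := Multiset.mem_map.mp hb
  exact (ncard_neighborSet_eq_degree G v).trans (h v)

lemma even_sum_degreeMultiset {V : Type*} [Fintype V] (G : SimpleGraph V) :
    Even (degreeMultiset G).sum := by
  classical
  have hsum : (degreeMultiset G).sum = ∑ v, G.degree v := by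
    simp only [degreeMultiset, ncard_neighborSet_eq_degree]
    rfl
  rw [hsum, sum_degrees_eq_twice_card_edges]
  exact even_two_mul _

lemma seqM_const (n d : ℕ) : seqM (fun _ : Fin n => d) = replicate n d := by
  rw [seqM, Multiset.map_const', Finset.card_val, Finset.card_univ, Fintype.card_fin]

lemma exists_disconnected_realization_const {n d : ℕ} (hn : 2 * d + 2 ≤ n)
    (hnd : Even (n * d)) :
    ∃ G : SimpleGraph (Fin n),
      degreeMultiset G = seqM (fun _ : Fin n => d) ∧ ¬ G.Connected := by
  classical
  set m := n - (d + 1)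
  have : NeZero m := ⟨by omega⟩
  have hmd : Even (m * d) := by
    have : n * d = m * d + (d + 1) * d := by rw [← add_mul]; congr 1; omega
    rw [this, Nat.even_add] at hnd
    exact hnd.mpr (Nat.even_mul_pred_self ..)
  obtain ⟨s, hs⟩ := exists_circulantGraph_isRegularOfDegree (m := m) (d := d) (by omega) hmd
  have hcard : Fintype.card (Fin (d + 1) ⊕ ZMod m) = n := by
    rw [Fintype.card_sum, Fintype.card_fin, ZMod.card]
    omega
  set G := (⊤ : SimpleGraph (Fin (d + 1))) ⊕g circulantGraph (s : Set (ZMod m))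
  have hG : G.IsRegularOfDegree d :=
    .sum (by simpa using IsRegularOfDegree.top (V := Fin (d + 1))) hs
  refine ⟨G.overFin hcard, ?_,
    fun hc => not_connected_sum ((G.overFinIso hcard).connected_iff.mpr hc)⟩
  rw [degreeMultiset_eq_replicate (hG.of_iso (G.overFinIso hcard)), seqM_const, Fintype.card_fin]

theorem stmt3_general (n dv : ℕ) (h1 : dv < n / 2)
    (hg : IsGraphicalSeq (fun _ : Fin n => dv)) :
    ¬ ForciblyConnectedSeq (fun _ : Fin n => dv) := by
  obtain ⟨G, hG⟩ := hg
  have hnd : Even (n * dv) := by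
    simpa [hG, seqM_const] using even_sum_degreeMultiset G
  obtain ⟨G', hG', hdisc⟩ := exists_disconnected_realization_const (by omega) hnd
  exact fun hfc => hdisc (hfc G' hG')

theorem stmt3 (n dv : ℕ) (hd : 0 < dv) (h1 : dv < n / 2) (h2 : dv ≤ n - 3)
    (hg : IsGraphicalSeq (fun _ : Fin n => dv)) :
    ¬ ForciblyConnectedSeq (fun _ : Fin n => dv) :=
  stmt3_general n dv h1 hg
end

section
/- Let N be even with 2n − 2 ≤ N ≤ n(n−1), and set b = ⌊(N−n+1)/(n−1)⌋ and a = N − (n−1)(b+1). Then the partition of N with n parts consisting of one part equal to n−1, a parts equal to b+1, and n−1−a parts equal to b is a graphical partition, and it is forcibly connected. -/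
open SimpleGraph Multiset Finset

/-!
Removing the vertex of degree `n - 1` leaves the sequence `b^a (b-1)^(n-1-a)` on `m = n - 1`
vertices, so it suffices to realize this near-regular sequence and add a vertex joined to
everything (a cone); every realization is connected through that universal vertex.
On `ZMod m` the near-regular graph is the circulant graph with a symmetric jump set `D` of size
`b - 1`, together with the matching `x ↔ x + s` on `x.val < a / 2`, whose jump `s` avoids `D`.
For `b - 1` even, `D` is the punctured cyclic ball of radius `(b - 1) / 2`; for `b - 1` odd and `m`
even, the antipode `m / 2` is added to it; for `b - 1` and `m` both odd (so `a` is odd) one takes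
the complement of the near-regular graph with parameters `(m - 1 - b, m - a)`; for `b = m` the
complete graph.
-/

namespace SimpleGraph

section Fintype

variable {V W : Type*} [Fintype V]

theorem degreeMultiset_eq_map_degree (G : SimpleGraph V) [DecidableRel G.Adj] :
    degreeMultiset G = univ.val.map fun v => G.degree v := by
  classical
  refine Multiset.map_congr rfl fun v _ => ?_
  rw [Set.ncard_eq_toFinset_card', ← card_neighborFinset_eq_degree, neighborFinset]

theorem card_degreeMultiset (G : SimpleGraph V) :
    Multiset.card (degreeMultiset G) = Fintype.card V := by
  simp [degreeMultiset, Finset.card_univ]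

theorem degreeMultiset_eq_of_iso [Fintype W] {G : SimpleGraph V} {G' : SimpleGraph W}
    (f : G ≃g G') : degreeMultiset G' = degreeMultiset G := by
  classical
  rw [degreeMultiset_eq_map_degree, degreeMultiset_eq_map_degree,
    ← Finset.map_univ_equiv f.toEquiv, Finset.map_val, Multiset.map_map]
  exact Multiset.map_congr rfl fun v _ => f.degree_eq v

theorem isGraphicalM_degreeMultiset (G : SimpleGraph V) : IsGraphicalM (degreeMultiset G) :=
  let e := Fintype.equivFinOfCardEq (card_degreeMultiset G).symm
  ⟨G.map e.toEmbedding, degreeMultiset_eq_of_iso (Iso.map e G)⟩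

theorem degreeMultiset_compl (G : SimpleGraph V) :
    degreeMultiset Gᶜ = (degreeMultiset G).map (Fintype.card V - 1 - ·) := by
  classical
  rw [degreeMultiset_eq_map_degree, degreeMultiset_eq_map_degree, Multiset.map_map]
  exact Multiset.map_congr rfl fun v _ => degree_compl G v

theorem degreeMultiset_eq_of_degree_eq_ite [DecidableEq V] (G : SimpleGraph V)
    [DecidableRel G.Adj] (S : Finset V) (d : ℕ)
    (h : ∀ v, G.degree v = if v ∈ S then d + 1 else d) :
    degreeMultiset G = replicate #S (d + 1) + replicate (Fintype.card V - #S) d := by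
  rw [degreeMultiset_eq_map_degree, ← Multiset.filter_add_not (· ∈ S) univ.val,
    Multiset.map_add]
  have hS : univ.val.filter (· ∈ S) = S.val := by
    rw [← Finset.filter_val, Finset.filter_mem_eq_inter, Finset.univ_inter]
  have hSc : Multiset.card (univ.val.filter (· ∉ S)) = Fintype.card V - #S := by
    rw [← Finset.filter_val, Finset.card_val, Finset.filter_not, Finset.filter_mem_eq_inter,
      Finset.univ_inter, Finset.card_sdiff_of_subset S.subset_univ, Finset.card_univ]
  congr 1 <;> rw [Multiset.eq_replicate] <;> refine ⟨by simp [hS, hSc], ?_⟩ <;>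
    simp +contextual [h]

theorem degreeMultiset_top :
    degreeMultiset (⊤ : SimpleGraph V) = replicate (Fintype.card V) (Fintype.card V - 1) := by
  classical
  simpa using degreeMultiset_eq_of_degree_eq_ite (⊤ : SimpleGraph V) ∅ (Fintype.card V - 1)
    fun v => by simp

theorem degree_sup_of_disjoint {G H : SimpleGraph V} [DecidableRel G.Adj] [DecidableRel H.Adj]
    (h : Disjoint G H) (v : V) : (G ⊔ H).degree v = G.degree v + H.degree v := by
  simp only [← card_neighborFinset_eq_degree, neighborFinset_sup_of_disjoint (h := h),
    card_disjUnion]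

end Fintype

section Cone

variable {V : Type*}

def cone (H : SimpleGraph V) : SimpleGraph (Option V) where
  Adj
    | none, none => False
    | some x, some y => H.Adj x y
    | _, _ => True
  symm := ⟨by rintro (_ | x) (_ | y) h <;> first | trivial | exact h.symm⟩
  loopless := ⟨by rintro (_ | x) h; exacts [h, H.loopless.1 x h]⟩

variable (H : SimpleGraph V)

theorem isUniversal_cone_none : (cone H).IsUniversal none := by
  rintro (_ | x) h
  exacts [(h rfl).elim, trivial]

theorem neighborSet_cone_some (x : V) :
    (cone H).neighborSet (some x) = insert none (some '' H.neighborSet x) := by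
  ext (_ | y)
  · simp only [Set.mem_insert_iff, true_or, iff_true]; trivial
  · simp only [mem_neighborSet, Set.mem_insert_iff, reduceCtorEq, Set.mem_image, Option.some.injEq,
      exists_eq_right, false_or]
    rfl

theorem degreeMultiset_cone [Fintype V] :
    degreeMultiset (cone H) = Fintype.card V ::ₘ (degreeMultiset H).map (· + 1) := by
  rw [degreeMultiset, degreeMultiset, Multiset.map_map]
  change Multiset.map _ (none ::ₘ univ.val.map some) = _
  rw [Multiset.map_cons, Multiset.map_map, (isUniversal_cone_none H).neighborSet_eq,
    Set.ncard_compl, Set.ncard_singleton, Nat.card_eq_fintype_card, Fintype.card_option,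
    Nat.add_sub_cancel]
  refine congrArg _ (Multiset.map_congr rfl fun x _ => ?_)
  rw [Function.comp_apply, neighborSet_cone_some, Set.ncard_insert_of_notMem (by simp),
    Set.ncard_image_of_injective _ (Option.some_injective V), Function.comp_apply]

end Cone

section AddCommGroup

variable {A : Type*} [AddCommGroup A]

def shiftMatching (I : Finset A) (s : A) : SimpleGraph A :=
  fromRel fun x y => x ∈ I ∧ y = x + s

variable {I : Finset A} {s : A}

theorem shiftMatching_adj {x y : A} :
    (shiftMatching I s).Adj x y ↔ x ≠ y ∧ (x ∈ I ∧ y = x + s ∨ y ∈ I ∧ x = y + s) :=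
  fromRel_adj ..

theorem disjoint_circulantGraph_shiftMatching {D : Set A} (hneg : ∀ z ∈ D, -z ∈ D)
    (hs : s ∉ D) : Disjoint (circulantGraph D) (shiftMatching I s) := by
  have hs' : -s ∉ D := fun h => hs (neg_neg s ▸ hneg _ h)
  rw [disjoint_left]
  rintro x y ⟨-, hD⟩ ⟨-, ⟨-, rfl⟩ | ⟨-, rfl⟩⟩ <;> simp_all

variable [DecidableEq A]

instance (I : Finset A) (s : A) : DecidableRel (shiftMatching I s).Adj :=
  inferInstanceAs (DecidableRel (fromRel _).Adj)

theorem mem_image_add_right_iff {v : A} : v ∈ I.image (· + s) ↔ v - s ∈ I := by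
  rw [Finset.image_add_right, Finset.mem_preimage, sub_eq_add_neg]

theorem card_union_image_add (hI : ∀ x ∈ I, x + s ∉ I) :
    #(I ∪ I.image (· + s)) = 2 * #I := by
  rw [Finset.card_union_of_disjoint, Finset.card_image_of_injective _ (add_left_injective s),
    two_mul]
  rw [Finset.disjoint_right]
  rintro _ hy
  obtain ⟨x, hx, rfl⟩ := Finset.mem_image.mp hy
  exact hI x hx

variable [Fintype A]

theorem degree_circulantGraph {D : Finset A} (h0 : 0 ∉ D) (hneg : ∀ z ∈ D, -z ∈ D) (x : A) :
    (circulantGraph (D : Set A)).degree x = #D := by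
  rw [← card_neighborFinset_eq_degree,
    ← Finset.card_image_of_injective D (add_right_injective x)]
  congr 1
  ext y
  simp only [mem_neighborFinset, circulantGraph_adj, Finset.mem_coe, Finset.mem_image]
  constructor
  · rintro ⟨-, h | h⟩
    · exact ⟨-(x - y), hneg _ h, by abel⟩
    · exact ⟨y - x, h, by abel⟩
  · rintro ⟨z, hz, rfl⟩
    refine ⟨fun h => h0 ?_, Or.inr (by simpa using hz)⟩
    rwa [left_eq_add.mp h] at hz

theorem degree_shiftMatching (hI : ∀ x ∈ I, x + s ∉ I) (v : A) :
    (shiftMatching I s).degree v = if v ∈ I ∪ I.image (· + s) then 1 else 0 := by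
  rw [← card_neighborFinset_eq_degree]
  by_cases h1 : v ∈ I
  · have : (shiftMatching I s).neighborFinset v = {v + s} := by
      ext y
      rw [mem_neighborFinset, shiftMatching_adj, Finset.mem_singleton]
      constructor
      · rintro ⟨-, ⟨-, rfl⟩ | ⟨hy, rfl⟩⟩
        exacts [rfl, (hI y hy h1).elim]
      · rintro rfl
        exact ⟨fun h => hI v h1 (h ▸ h1), Or.inl ⟨h1, rfl⟩⟩
    rw [this, if_pos (Finset.mem_union_left _ h1), Finset.card_singleton]
  by_cases h2 : v - s ∈ I
  · have : (shiftMatching I s).neighborFinset v = {v - s} := by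
      ext y
      rw [mem_neighborFinset, shiftMatching_adj, Finset.mem_singleton]
      constructor
      · rintro ⟨-, ⟨hv, -⟩ | ⟨-, rfl⟩⟩
        exacts [(h1 hv).elim, (add_sub_cancel_right y s).symm]
      · rintro rfl
        refine ⟨fun h => h1 ?_, Or.inr ⟨h2, (sub_add_cancel v s).symm⟩⟩
        rwa [← h] at h2
    rw [this, if_pos (Finset.mem_union_right _ (mem_image_add_right_iff.mpr h2)),
      Finset.card_singleton]
  · have : (shiftMatching I s).neighborFinset v = ∅ := by
      ext y
      simp only [mem_neighborFinset, shiftMatching_adj, Finset.notMem_empty, iff_false]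
      rintro ⟨-, ⟨hv, -⟩ | ⟨hy, rfl⟩⟩
      exacts [h1 hv, h2 (by simpa using hy)]
    rw [this, if_neg (by rw [Finset.mem_union, mem_image_add_right_iff]; tauto), Finset.card_empty]

theorem degreeMultiset_circulantGraph_sup_shiftMatching {D : Finset A} (h0 : 0 ∉ D)
    (hneg : ∀ z ∈ D, -z ∈ D) (hs : s ∉ D) (hI : ∀ x ∈ I, x + s ∉ I) :
    degreeMultiset (circulantGraph (D : Set A) ⊔ shiftMatching I s) =
      replicate (2 * #I) (#D + 1) + replicate (Fintype.card A - 2 * #I) #D := by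
  rw [← card_union_image_add hI]
  refine degreeMultiset_eq_of_degree_eq_ite _ _ _ fun v => ?_
  rw [degree_sup_of_disjoint (disjoint_circulantGraph_shiftMatching hneg hs),
    degree_circulantGraph h0 hneg, degree_shiftMatching hI]
  split_ifs <;> rfl

end AddCommGroup

end SimpleGraph

theorem forciblyConnectedM_of_card_sub_one_mem {m : Multiset ℕ} (h : Multiset.card m - 1 ∈ m) :
    ForciblyConnectedM m := by
  classical
  intro G hG
  rw [← hG, degreeMultiset_eq_map_degree, Multiset.mem_map] at h
  obtain ⟨v, -, hv⟩ := h
  refine Connected.of_isUniversal (v := v) ?_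
  rw [← degree_eq_card_sub_one, hv, Multiset.card_map, Finset.card_val, Finset.card_univ]

namespace ZMod

theorem val_add_natCast_of_val_lt {m h s : ℕ} (hsm : s + h ≤ m) {x : ZMod m} (hx : x.val < h) :
    (x + s).val = x.val + s := by
  rw [val_add_of_lt] <;> rw [val_natCast_of_lt (by omega)]
  omega

def cyclicBall (m : ℕ) [NeZero m] (k : ℕ) : Finset (ZMod m) :=
  {z | 0 < z.val ∧ (z.val ≤ k ∨ m ≤ z.val + k)}

variable {m : ℕ} [NeZero m]

theorem card_filter_val (P : ℕ → Prop) [DecidablePred P] :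
    #{z : ZMod m | P z.val} = #{i ∈ Finset.range m | P i} := by
  refine Finset.card_nbij' val Nat.cast ?_ ?_ (fun z _ => natCast_zmod_val z) ?_ <;>
    intro _ h <;> simp_all [val_lt, Nat.mod_eq_of_lt]

theorem card_filter_val_lt {h : ℕ} (hm : h ≤ m) : #{z : ZMod m | z.val < h} = h := by
  rw [card_filter_val (· < h)]
  have : {i ∈ Finset.range m | i < h} = Finset.range h := by
    ext i
    simp only [Finset.mem_filter, Finset.mem_range]
    omega
  rw [this, Finset.card_range]

variable {k : ℕ}

theorem mem_cyclicBall {z : ZMod m} :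
    z ∈ cyclicBall m k ↔ 0 < z.val ∧ (z.val ≤ k ∨ m ≤ z.val + k) := by
  simp [cyclicBall]

theorem zero_notMem_cyclicBall : (0 : ZMod m) ∉ cyclicBall m k := by
  simp [mem_cyclicBall]

theorem neg_mem_cyclicBall {z : ZMod m} (hz : z ∈ cyclicBall m k) : -z ∈ cyclicBall m k := by
  rw [mem_cyclicBall] at hz ⊢
  rw [neg_val, if_neg ((val_ne_zero z).mp hz.1.ne')]
  have := val_lt z
  omega

theorem card_cyclicBall (hk : 2 * k < m) : #(cyclicBall m k) = 2 * k := by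
  rw [cyclicBall, card_filter_val fun i => 0 < i ∧ (i ≤ k ∨ m ≤ i + k)]
  have : {i ∈ Finset.range m | 0 < i ∧ (i ≤ k ∨ m ≤ i + k)} =
      Finset.Icc 1 k ∪ Finset.Ico (m - k) m := by
    ext i
    simp only [Finset.mem_filter, Finset.mem_range, Finset.mem_union, Finset.mem_Icc,
      Finset.mem_Ico]
    omega
  rw [this, Finset.card_union_of_disjoint, Nat.card_Icc, Nat.card_Ico]
  · omega
  · rw [Finset.disjoint_left]
    simp only [Finset.mem_Icc, Finset.mem_Ico]
    omega

theorem natCast_notMem_cyclicBall {s : ℕ} (hks : k < s) (hsk : s + k < m) :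
    (s : ZMod m) ∉ cyclicBall m k := by
  rw [mem_cyclicBall, val_natCast_of_lt (by omega)]
  omega

end ZMod

section NearRegular

open ZMod

variable {m : ℕ} [NeZero m]

theorem exists_degreeMultiset_eq_of_jumpSet (D : Finset (ZMod m)) (h0 : 0 ∉ D)
    (hneg : ∀ z ∈ D, -z ∈ D) {h s : ℕ} (hhs : h ≤ s) (hsm : s + h ≤ m)
    (hsD : (s : ZMod m) ∉ D) :
    ∃ G : SimpleGraph (ZMod m),
      degreeMultiset G = replicate (2 * h) (#D + 1) + replicate (m - 2 * h) #D := by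
  set I : Finset (ZMod m) := {z | z.val < h}
  have hI : ∀ x ∈ I, x + s ∉ I := by
    simp only [I, Finset.mem_filter, Finset.mem_univ, true_and]
    intro x hx
    rw [val_add_natCast_of_val_lt hsm hx]
    omega
  refine ⟨_, degreeMultiset_circulantGraph_sup_shiftMatching h0 hneg hsD hI |>.trans ?_⟩
  rw [card_filter_val_lt (by omega), ZMod.card]

theorem exists_degreeMultiset_eq_of_even {d a : ℕ} (hd : Even d) (ha : Even a) (hdm : d + 2 ≤ m)
    (ham : a ≤ m) :
    ∃ G : SimpleGraph (ZMod m), degreeMultiset G = replicate a (d + 1) + replicate (m - a) d := by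
  obtain ⟨k, rfl⟩ := hd
  obtain ⟨h, rfl⟩ := ha
  -- the jump `s = max h (k + 1)` lies outside the ball and keeps `[0, h)`, `[s, s + h)` disjoint
  obtain ⟨G, hG⟩ := exists_degreeMultiset_eq_of_jumpSet (cyclicBall m k) zero_notMem_cyclicBall
    (fun _ => neg_mem_cyclicBall) (le_max_left h (k + 1)) (by omega)
    (natCast_notMem_cyclicBall (by omega) (by omega))
  exact ⟨G, by rw [hG, card_cyclicBall (by omega), two_mul, two_mul]⟩

theorem exists_degreeMultiset_eq_of_odd_of_even_card {d a : ℕ} (hm : Even m) (hd : Odd d)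
    (ha : Even a) (hdm : d + 1 < m) (ham : a < m) :
    ∃ G : SimpleGraph (ZMod m), degreeMultiset G = replicate a (d + 1) + replicate (m - a) d := by
  obtain ⟨k, rfl⟩ := hd
  obtain ⟨h, rfl⟩ := ha
  obtain ⟨r, rfl⟩ := hm
  set D := insert (r : ZMod (r + r)) (cyclicBall (r + r) k)
  have hrD : (r : ZMod (r + r)) ∉ cyclicBall (r + r) k :=
    natCast_notMem_cyclicBall (by omega) (by omega)
  have hnotMem {j : ℕ} (hj : j < r + r) (hjr : j ≠ r)
      (hjB : (j : ZMod (r + r)) ∉ cyclicBall _ k) : (j : ZMod (r + r)) ∉ D := by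
    intro hjD
    rcases Finset.mem_insert.mp hjD with hc | hc
    · have := congrArg ZMod.val hc
      rw [val_natCast_of_lt hj, val_natCast_of_lt (by omega)] at this
      exact hjr this
    · exact hjB hc
  have h0 : (0 : ZMod (r + r)) ∉ D := by
    exact_mod_cast hnotMem (j := 0) (by omega) (by omega) (by simpa using zero_notMem_cyclicBall)
  have hneg : ∀ z ∈ D, -z ∈ D := by
    intro z hz
    rcases Finset.mem_insert.mp hz with rfl | hz
    · refine Finset.mem_insert.mpr (Or.inl (neg_eq_of_add_eq_zero_left ?_))
      rw [← Nat.cast_add, natCast_self]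
    · exact Finset.mem_insert_of_mem (neg_mem_cyclicBall hz)
  obtain ⟨G, hG⟩ := exists_degreeMultiset_eq_of_jumpSet D h0 hneg (le_max_left h (k + 1))
    (by omega) (hnotMem (by omega) (by omega) (natCast_notMem_cyclicBall (by omega) (by omega)))
  exact ⟨G, by rw [hG, Finset.card_insert_of_notMem hrD, card_cyclicBall (by omega), two_mul]⟩

theorem exists_degreeMultiset_eq_of_odd_of_odd_card {d a : ℕ} (hm : Odd m) (hd : Odd d)
    (ha : Odd a) (hdm : d + 1 < m) (ham : a ≤ m) :
    ∃ G : SimpleGraph (ZMod m), degreeMultiset G = replicate a (d + 1) + replicate (m - a) d := by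
  obtain ⟨G, hG⟩ := exists_degreeMultiset_eq_of_even (m := m) (d := m - (d + 2)) (a := m - a)
    (Nat.Odd.sub_odd hm (hd.add_even even_two)) (Nat.Odd.sub_odd hm ha) (by omega) (by omega)
  refine ⟨Gᶜ, ?_⟩
  rw [degreeMultiset_compl, hG, ZMod.card, Multiset.map_add, Multiset.map_replicate,
    Multiset.map_replicate, add_comm]
  congr 2 <;> omega

theorem exists_degreeMultiset_eq_nearRegular {d a : ℕ} (hd : d + 1 < m ∨ d + 1 = m ∧ a = 0)
    (ham : a < m) (hpar : Even (m * d + a)) :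
    ∃ G : SimpleGraph (ZMod m), degreeMultiset G = replicate a (d + 1) + replicate (m - a) d := by
  rcases hd with hd | ⟨hd, rfl⟩
  · rcases Nat.even_or_odd d with hde | hdo
    · exact exists_degreeMultiset_eq_of_even hde ((Nat.even_add.mp hpar).mp (hde.mul_left m))
        (by omega) ham.le
    rcases Nat.even_or_odd m with hme | hmo
    · exact exists_degreeMultiset_eq_of_odd_of_even_card hme hdo
        ((Nat.even_add.mp hpar).mp (hme.mul_right d)) hd ham
    · refine exists_degreeMultiset_eq_of_odd_of_odd_card hmo hdo ?_ hd ham.le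
      exact Nat.not_even_iff_odd.mp fun ha =>
        Nat.not_even_iff_odd.mpr (hmo.mul hdo) ((Nat.even_add.mp hpar).mpr ha)
  · refine ⟨⊤, ?_⟩
    rw [degreeMultiset_top, ZMod.card, ← hd]
    simp

end NearRegular

theorem isGraphicalM_cons_nearRegular {m d a : ℕ} (hd : d + 1 < m ∨ d + 1 = m ∧ a = 0)
    (ham : a < m) (hpar : Even (m * d + a)) :
    IsGraphicalM (m ::ₘ (replicate a (d + 2) + replicate (m - a) (d + 1))) := by
  have : NeZero m := ⟨by omega⟩
  obtain ⟨G, hG⟩ := exists_degreeMultiset_eq_nearRegular hd ham hpar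
  have hcone := degreeMultiset_cone G
  rw [hG, ZMod.card, Multiset.map_add, Multiset.map_replicate, Multiset.map_replicate] at hcone
  exact hcone ▸ isGraphicalM_degreeMultiset (cone G)

theorem sum_cons_replicate_add_replicate {k a b : ℕ} (ha : a ≤ k) :
    (k ::ₘ (replicate a (b + 1) + replicate (k - a) b)).sum = k * b + a + k := by
  obtain ⟨c, rfl⟩ : ∃ c, k = a + c := ⟨k - a, by omega⟩
  simp only [Multiset.sum_cons, Multiset.sum_add, Multiset.sum_replicate, smul_eq_mul,
    Nat.add_sub_cancel_left]
  ring

theorem div_sub_mod_bounds {k N b a : ℕ} (hk : 0 < k) (h1 : 2 * k ≤ N) (h2 : N ≤ (k + 1) * k)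
    (hb : b = (N - k) / k) (ha : a = N - k * (b + 1)) :
    N = k * b + a + k ∧ a < k ∧ 0 < b ∧ (b < k ∨ b = k ∧ a = 0) := by
  have hdiv := Nat.div_add_mod (N - k) k
  have hmod : (N - k) % k < k := Nat.mod_lt _ hk
  rw [← hb] at hdiv
  rw [mul_add_one] at ha
  have hb0 : 0 < b := by
    rcases Nat.eq_zero_or_pos b with rfl | hb0
    · omega
    · exact hb0
  have hbk : b ≤ k := by
    refine Nat.le_of_mul_le_mul_left ?_ hk
    rw [add_one_mul] at h2
    omega
  refine ⟨by omega, by omega, hb0, hbk.lt_or_eq.imp_right fun hbk => ⟨hbk, ?_⟩⟩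
  subst hbk
  rw [add_one_mul] at h2
  omega

theorem stmt11 (N n : ℕ) (hn : 2 ≤ n) (hN : Even N)
    (h1 : 2 * n - 2 ≤ N) (h2 : N ≤ n * (n - 1))
    (b a : ℕ) (hb : b = (N - n + 1) / (n - 1)) (ha : a = N - (n - 1) * (b + 1))
    (m : Multiset ℕ)
    (hm : m = (n - 1) ::ₘ (Multiset.replicate a (b + 1) + Multiset.replicate (n - 1 - a) b)) :
    0 < b ∧ b ≤ n - 1 ∧ a < n - 1 ∧
    Multiset.card m = n ∧ Multiset.sum m = N ∧ 0 ∉ m ∧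
    IsGraphicalM m ∧ ForciblyConnectedM m := by
  obtain ⟨k, rfl⟩ : ∃ k, n = k + 1 := ⟨n - 1, by omega⟩
  simp only [Nat.add_sub_cancel] at h1 h2 hb ha hm ⊢
  obtain ⟨hN', hak, hb0, hbk⟩ :=
    div_sub_mod_bounds (by omega) (by omega) h2 (by rw [hb]; congr 1; omega) ha
  obtain ⟨d, rfl⟩ : ∃ d, b = d + 1 := ⟨b - 1, by omega⟩
  have hcard : Multiset.card m = k + 1 := by
    simp only [hm, Multiset.card_cons, Multiset.card_add, Multiset.card_replicate]
    omega
  have hpar : Even (k * d + a) := by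
    rw [show N = k * d + a + 2 * k by rw [hN']; ring] at hN
    exact (Nat.even_add.mp hN).mpr (even_two_mul k)
  refine ⟨hb0, by omega, hak, hcard, hm ▸ hN' ▸ sum_cons_replicate_add_replicate hak.le, ?_,
    hm ▸ isGraphicalM_cons_nearRegular hbk hak hpar, ?_⟩
  · simp only [hm, Multiset.mem_cons, Multiset.mem_add, Multiset.mem_replicate]
    omega
  · refine forciblyConnectedM_of_card_sub_one_mem ?_
    rw [hcard, Nat.add_sub_cancel, hm]
    exact Multiset.mem_cons_self _ _
end
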